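/- arXiv:1908.06551 — 4 statements merged into one kernel-verified Lean document; each statement's English description precedes it below -/
import Mathlib

section
/- Let A, B be commutative domains over an algebraically closed field k of characteristic p, each equipped with a k-linear Poisson bracket, let A₁ ⊆ A be a Poisson subalgebra, and let f : A → B be a k-algebra isomorphism whose restriction to A₁ preserves the Poisson bracket. If [Frac(A) : Frac(A₁)] < p, then f preserves the Poisson bracket on all of A. -/
/-- A Poisson bracket on a commutative `k`-algebra `A`: a `k`-bilinear Lie bracket which
is a derivation in each argument. -/
structure PoissonBracket (k A : Type*) [CommRing k] [CommRing A] [Algebra k A] where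
  B : A →ₗ[k] A →ₗ[k] A
  antisymm : ∀ a b : A, B a b = - B b a
  jacobi : ∀ a b c : A, B a (B b c) = B (B a b) c + B b (B a c)
  leibniz : ∀ a b c : A, B a (b * c) = B a b * c + b * B a c

open Polynomial

set_option maxHeartbeats 1000000

theorem aux_deriv_zero {R : Type*} [CommRing R] [IsDomain R] (p : ℕ) [Fact p.Prime]
    [CharP R p] (K : Subfield (FractionRing R))
    (hdeg : Module.finrank K (FractionRing R) < p)
    (hfin : 0 < Module.finrank K (FractionRing R))
    (d : R → R)
    (hadd : ∀ x y, d (x + y) = d x + d y)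
    (hmul : ∀ x y, d (x * y) = d x * y + x * d y)
    (hgen : K ≤ Subfield.closure ((algebraMap R (FractionRing R)) '' {a | d a = 0})) :
    ∀ a, d a = 0 := by
  classical
  let L := FractionRing R
  let φ : R →+* L := algebraMap R L
  have hφinj : Function.Injective φ := IsFractionRing.injective R L
  have hφne : ∀ s ∈ nonZeroDivisors R, φ s ≠ 0 := fun s hs =>
    IsFractionRing.to_map_ne_zero_of_mem_nonZeroDivisors hs
  -- basic facts about d
  have hd0 : d 0 = 0 := by
    have h := hadd 0 0
    rw [add_zero] at h
    exact (left_eq_add.mp h)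
  have hd1 : d 1 = 0 := by
    have h := hmul 1 1
    rw [mul_one, mul_one, one_mul] at h
    exact (left_eq_add.mp h)
  -- the extension of d to L
  obtain ⟨D, hDdef⟩ : ∃ D : L → L, ∀ x : L, D x =
      (φ ((IsLocalization.sec (nonZeroDivisors R) x).2 : R))⁻¹ *
      (φ (d (IsLocalization.sec (nonZeroDivisors R) x).1) -
        x * φ (d ((IsLocalization.sec (nonZeroDivisors R) x).2 : R))) :=
    ⟨_, fun _ => rfl⟩
  have hspec : ∀ (x : L) (a s : R), s ∈ nonZeroDivisors R → x * φ s = φ a →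
      D x = (φ s)⁻¹ * (φ (d a) - x * φ (d s)) := by
    intro x a s hs hx
    set b := (IsLocalization.sec (nonZeroDivisors R) x).1 with hb
    set t := ((IsLocalization.sec (nonZeroDivisors R) x).2 : R) with htd
    have ht : t ∈ nonZeroDivisors R := (IsLocalization.sec (nonZeroDivisors R) x).2.2
    have hxt : x * φ t = φ b := IsLocalization.sec_spec (nonZeroDivisors R) x
    have hs0 : φ s ≠ 0 := hφne s hs
    have ht0 : φ t ≠ 0 := hφne t ht
    have hrelR : a * t = b * s := by
      apply hφinj
      rw [map_mul, map_mul, ← hx, ← hxt]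
      ring
    have hrel : φ (d a) * φ t + φ a * φ (d t) = φ (d b) * φ s + φ b * φ (d s) := by
      have := congrArg (fun z => φ (d z)) hrelR
      simp only [hmul] at this
      rw [map_add, map_add, map_mul, map_mul, map_mul, map_mul] at this
      linear_combination this
    rw [hDdef, ← htd, ← hb]
    rw [inv_mul_eq_div, inv_mul_eq_div, div_eq_div_iff ht0 hs0]
    linear_combination φ (d s) * hxt - φ (d t) * hx - hrel
  have hDφ : ∀ a : R, D (φ a) = φ (d a) := by
    intro a
    have h1 : (φ a) * φ (1 : R) = φ a := by rw [map_one, mul_one]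
    rw [hspec (φ a) a 1 (one_mem _) h1, hd1, map_zero, mul_zero, sub_zero, map_one, inv_one,
      one_mul]
  have hD0 : D 0 = 0 := by
    have := hDφ 0
    rwa [map_zero, hd0, map_zero] at this
  have hD1 : D 1 = 0 := by
    have := hDφ 1
    rwa [map_one, hd1, map_zero] at this
  have hDadd : ∀ x y : L, D (x + y) = D x + D y := by
    intro x y
    obtain ⟨⟨a, s⟩, hx⟩ : ∃ q : R × nonZeroDivisors R, x * φ q.2 = φ q.1 :=
      ⟨IsLocalization.sec (nonZeroDivisors R) x, IsLocalization.sec_spec _ x⟩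
    obtain ⟨⟨b, t⟩, hy⟩ : ∃ q : R × nonZeroDivisors R, y * φ q.2 = φ q.1 :=
      ⟨IsLocalization.sec (nonZeroDivisors R) y, IsLocalization.sec_spec _ y⟩
    have hs0 : φ s ≠ 0 := hφne s s.2
    have ht0 : φ t ≠ 0 := hφne t t.2
    have hst : (x + y) * φ ((s : R) * t) = φ (a * t + b * s) := by
      rw [map_mul, map_add, map_mul, map_mul]
      linear_combination φ (t : R) * hx + φ (s : R) * hy
    rw [hspec _ _ _ (mul_mem s.2 t.2) hst, hspec x a s s.2 hx, hspec y b t t.2 hy]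
    have hx' : x = φ a / φ s := (eq_div_iff hs0).mpr hx
    have hy' : y = φ b / φ t := (eq_div_iff ht0).mpr hy
    rw [hx', hy']
    simp only [hadd, hmul, map_add, map_mul]
    simp only [L] at *; field_simp
    ring
  have hDmul : ∀ x y : L, D (x * y) = D x * y + x * D y := by
    intro x y
    obtain ⟨⟨a, s⟩, hx⟩ : ∃ q : R × nonZeroDivisors R, x * φ q.2 = φ q.1 :=
      ⟨IsLocalization.sec (nonZeroDivisors R) x, IsLocalization.sec_spec _ x⟩
    obtain ⟨⟨b, t⟩, hy⟩ : ∃ q : R × nonZeroDivisors R, y * φ q.2 = φ q.1 :=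
      ⟨IsLocalization.sec (nonZeroDivisors R) y, IsLocalization.sec_spec _ y⟩
    have hs0 : φ s ≠ 0 := hφne s s.2
    have ht0 : φ t ≠ 0 := hφne t t.2
    have hst : (x * y) * φ ((s : R) * t) = φ (a * b) := by
      rw [map_mul, map_mul]
      calc x * y * (φ s * φ t) = (x * φ s) * (y * φ t) := by ring
        _ = φ a * φ b := by rw [hx, hy]
    rw [hspec _ _ _ (mul_mem s.2 t.2) hst, hspec x a s s.2 hx, hspec y b t t.2 hy]
    have hx' : x = φ a / φ s := (eq_div_iff hs0).mpr hx
    have hy' : y = φ b / φ t := (eq_div_iff ht0).mpr hy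
    rw [hx', hy']
    simp only [hmul, map_add, map_mul]
    simp only [L] at *; field_simp
    ring
  have hDneg : ∀ x : L, D (-x) = -D x := by
    intro x
    have h := hDadd x (-x)
    rw [add_neg_cancel, hD0] at h
    linear_combination -h
  -- D vanishes on K
  have hDK : ∀ x : L, x ∈ K → D x = 0 := by
    let Z : Subfield L :=
      { carrier := {x | D x = 0}
        mul_mem' := by
          intro x y hx hy
          simp only [Set.mem_setOf_eq] at *
          rw [hDmul, hx, hy, mul_zero, zero_mul, add_zero]
        one_mem' := hD1
        add_mem' := by
          intro x y hx hy
          simp only [Set.mem_setOf_eq] at *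
          rw [hDadd, hx, hy, add_zero]
        zero_mem' := hD0
        neg_mem' := by
          intro x hx
          simp only [Set.mem_setOf_eq] at *
          rw [hDneg, hx, neg_zero]
        inv_mem' := by
          intro x hx
          simp only [Set.mem_setOf_eq] at *
          rcases eq_or_ne x 0 with h | h
          · rw [h, inv_zero]; exact hD0
          · have h1 : x * x⁻¹ = 1 := mul_inv_cancel₀ h
            have h2 := hDmul x x⁻¹
            rw [h1, hD1, hx, zero_mul, zero_add] at h2
            have := h2.symm
            rcases mul_eq_zero.mp this with h3 | h3
            · exact absurd h3 h
            · exact h3 }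
    have hsub : Subfield.closure (φ '' {a | d a = 0}) ≤ Z := by
      rw [Subfield.closure_le]
      rintro _ ⟨a, ha, rfl⟩
      show D (φ a) = 0
      rw [hDφ, ha, map_zero]
    intro x hx
    exact hsub (hgen hx)
  -- characteristic of K
  have hp : p.Prime := Fact.out
  haveI : CharP L p := charP_of_injective_ringHom hφinj p
  haveI : CharP K p := by
    rw [CharP.charP_iff_prime_eq_zero hp]
    have h1 : ((p : K) : L) = (p : L) := by push_cast; ring
    have h2 : ((p : K) : L) = 0 := by rw [h1, CharP.cast_eq_zero]
    exact_mod_cast h2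
  haveI : FiniteDimensional K L := Module.finite_of_finrank_pos hfin
  -- bundle D as a K-derivation
  let E : Derivation K L L :=
    { toFun := D
      map_add' := hDadd
      map_smul' := by
        intro c x
        simp only [RingHom.id_apply]
        have h1 : c • x = (c : L) * x := rfl
        have h2 : c • D x = (c : L) * D x := rfl
        rw [h1, h2, hDmul, hDK _ c.2, zero_mul, zero_add]
      map_one_eq_zero' := hD1
      leibniz' := by
        intro x y
        simp only [LinearMap.coe_mk, AddHom.coe_mk, smul_eq_mul]
        rw [hDmul]
        ring }
  have hE : ∀ x : L, E x = D x := fun _ => rfl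
  -- every element of L: D vanishes
  have hE0 : ∀ x : L, D x = 0 := by
    intro x
    have hint : IsIntegral K x := IsIntegral.of_finite K x
    have hm0 : minpoly K x ≠ 0 := minpoly.ne_zero hint
    have hder : Polynomial.derivative (minpoly K x) ≠ 0 := by
      intro h
      have h2 : (Polynomial.expand K p) (Polynomial.contract p (minpoly K x)) = minpoly K x :=
        Polynomial.expand_contract p h hp.ne_zero
      have h3 : (Polynomial.contract p (minpoly K x)).natDegree * p = (minpoly K x).natDegree := by
        have h3' := congrArg Polynomial.natDegree h2
        rwa [Polynomial.natDegree_expand] at h3'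
      have h4 : 0 < (minpoly K x).natDegree := minpoly.natDegree_pos hint
      have h5 : (minpoly K x).natDegree ≤ Module.finrank K L := minpoly.natDegree_le x
      have hdeg' : Module.finrank K L < p := hdeg
      have h6 : 0 < (Polynomial.contract p (minpoly K x)).natDegree := by
        rcases Nat.eq_zero_or_pos (Polynomial.contract p (minpoly K x)).natDegree with h7 | h7
        · rw [h7, zero_mul] at h3; omega
        · exact h7
      have h8 : p ≤ (minpoly K x).natDegree := by
        rw [← h3]; exact Nat.le_mul_of_pos_left p h6
      omega
    have heval : Polynomial.aeval x (Polynomial.derivative (minpoly K x)) ≠ 0 := by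
      intro h
      have h1 := minpoly.degree_le_of_ne_zero K x hder h
      have h2 := Polynomial.degree_derivative_lt hm0
      exact absurd (h1.trans_lt h2) (lt_irrefl _)
    have h0 : E (Polynomial.aeval x (minpoly K x)) =
        Polynomial.aeval x (Polynomial.derivative (minpoly K x)) • E x :=
      Derivation.map_aeval E (minpoly K x) x
    rw [minpoly.aeval, map_zero] at h0
    have := (smul_eq_zero.mp h0.symm).resolve_left heval
    rwa [hE] at this
  intro a
  have h := hE0 (φ a)
  rw [hDφ a] at h
  apply hφinj
  rw [h, map_zero]

/-- Let `A, B` be commutative domains over an algebraically closed field `k`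
of characteristic `p`, each with a `k`-linear Poisson bracket, `A₁ ⊆ A` a Poisson subalgebra,
and `f : A → B` a `k`-algebra isomorphism whose restriction to `A₁` preserves the bracket.
If `[Frac A : Frac A₁] < p`, then `f` preserves the Poisson bracket on all of `A`. -/
theorem fixed_ring_stmt_2 (k A B : Type*) [Field k] [IsAlgClosed k]
    (p : ℕ) [Fact p.Prime] [CharP k p]
    [CommRing A] [IsDomain A] [Algebra k A] [CommRing B] [IsDomain B] [Algebra k B]
    (PA : PoissonBracket k A) (PB : PoissonBracket k B)
    (A₁ : Subalgebra k A) (hA₁ : ∀ a ∈ A₁, ∀ b ∈ A₁, PA.B a b ∈ A₁)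
    (f : A ≃ₐ[k] B) (hf : ∀ a ∈ A₁, ∀ b ∈ A₁, f (PA.B a b) = PB.B (f a) (f b))
    (hdeg : Module.finrank
        (Subfield.closure ((algebraMap A (FractionRing A)) '' (A₁ : Set A)))
        (FractionRing A) < p)
    (hfin : 0 < Module.finrank
        (Subfield.closure ((algebraMap A (FractionRing A)) '' (A₁ : Set A)))
        (FractionRing A)) :
    ∀ a b : A, f (PA.B a b) = PB.B (f a) (f b) := by
  haveI : CharP A p := charP_of_injective_ringHom (algebraMap k A).injective p
  have key : ∀ d : A → A, (∀ x y, d (x + y) = d x + d y) →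
      (∀ x y, d (x * y) = d x * y + x * d y) →
      (∀ a ∈ A₁, d a = 0) → ∀ a, d a = 0 := by
    intro d h1 h2 h3
    refine aux_deriv_zero p _ hdeg hfin d h1 h2 ?_
    refine Subfield.closure_mono ?_
    rintro _ ⟨a, ha, rfl⟩
    exact ⟨a, h3 a ha, rfl⟩
  have step1 : ∀ a ∈ A₁, ∀ b, f (PA.B a b) = PB.B (f a) (f b) := by
    intro a ha b
    have hz := key (fun x => PA.B a x - f.symm (PB.B (f a) (f x)))
      (by
        intro x y
        simp only [map_add]
        ring)
      (by
        intro x y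
        simp only [map_mul, PA.leibniz, PB.leibniz, map_add]
        simp only [AlgEquiv.symm_apply_apply]
        ring)
      (by
        intro b hb
        rw [← hf a ha b hb, AlgEquiv.symm_apply_apply, sub_self])
    have h := hz b
    have h' : PA.B a b = f.symm (PB.B (f a) (f b)) := sub_eq_zero.mp h
    rw [h', AlgEquiv.apply_symm_apply]
  intro a b
  have LA : ∀ x y : A, PA.B (x * y) b = PA.B x b * y + x * PA.B y b := by
    intro x y
    calc PA.B (x * y) b = -PA.B b (x * y) := PA.antisymm _ _
      _ = -(PA.B b x * y + x * PA.B b y) := by rw [PA.leibniz]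
      _ = (-PA.B b x) * y + x * (-PA.B b y) := by ring
      _ = PA.B x b * y + x * PA.B y b := by rw [← PA.antisymm, ← PA.antisymm]
  have LB : ∀ x y z : B, PB.B (x * y) z = PB.B x z * y + x * PB.B y z := by
    intro x y z
    calc PB.B (x * y) z = -PB.B z (x * y) := PB.antisymm _ _
      _ = -(PB.B z x * y + x * PB.B z y) := by rw [PB.leibniz]
      _ = (-PB.B z x) * y + x * (-PB.B z y) := by ring
      _ = PB.B x z * y + x * PB.B y z := by rw [← PB.antisymm, ← PB.antisymm]
  have hz := key (fun x => PA.B x b - f.symm (PB.B (f x) (f b)))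
    (by
      intro x y
      simp only [map_add, LinearMap.add_apply]
      ring)
    (by
      intro x y
      simp only [LA, map_mul, LB, map_add]
      simp only [AlgEquiv.symm_apply_apply]
      ring)
    (by
      intro x hx
      rw [← step1 x hx b, AlgEquiv.symm_apply_apply, sub_self])
  have h := hz a
  have h' : PA.B a b = f.symm (PB.B (f a) (f b)) := sub_eq_zero.mp h
  rw [h', AlgEquiv.apply_symm_apply]
end

section
/- Let R be an associative ring which is flat (torsion-free) over ℤ, and let p be a prime. For a, b in the center Z(R/pR), choose lifts z, w ∈ R; then [z, w] ∈ pR, and the element (1/p)[z, w] mod p lies in Z(R/pR) and is independent of the choice of lifts. This defines a well-defined bracket {a, b} on Z(R/pR). -/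
/-- Let `R` be an associative ring, flat (torsion-free) over `ℤ`, `p` a prime,
and let `π : R → S` be the reduction modulo `p` (a surjective ring map with kernel `pR`).
For `a, b` in the center of `S = R/pR` with lifts `z, w ∈ R`, the commutator `[z, w]` lies
in `pR`; writing `[z, w] = p·u`, the class `π u` is central and independent of the choice of
lifts.  This defines a well-defined bracket `{a, b}` on `Z(R/pR)`. -/
theorem fixed_ring_stmt_3 (R S : Type*) [Ring R] [Ring S] [NoZeroSMulDivisors ℤ R]
    (p : ℕ) [Fact p.Prime] (π : R →+* S) (hsurj : Function.Surjective π)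
    (hker : ∀ r : R, π r = 0 ↔ ∃ t : R, r = (p : R) * t)
    (z w : R) (hz : π z ∈ Subring.center S) (hw : π w ∈ Subring.center S) :
    (∃ u : R, z * w - w * z = (p : R) * u) ∧
      (∀ u : R, z * w - w * z = (p : R) * u →
        (π u ∈ Subring.center S ∧
          ∀ z' w' u' : R, π z' = π z → π w' = π w →
            z' * w' - w' * z' = (p : R) * u' → π u' = π u)) := by
  have hp0 : (p : ℤ) ≠ 0 := by exact_mod_cast (Fact.out : p.Prime).ne_zero
  -- `p` commutes with everything
  have hswap : ∀ x y : R, x * ((p : R) * y) = (p : R) * (x * y) := by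
    intro x y
    rw [← mul_assoc, ← (Nat.cast_commute p x).eq, mul_assoc]
  -- cancellation of p in R
  have hcan : ∀ x y : R, (p : R) * x = (p : R) * y → x = y := by
    intro x y h
    have h2 : (p : ℤ) • (x - y) = 0 := by
      rw [zsmul_eq_mul]
      push_cast
      rw [mul_sub, h, sub_self]
    rcases smul_eq_zero.mp h2 with h3 | h3
    · exact absurd h3 hp0
    · exact sub_eq_zero.mp h3
  have hpz : ∀ x : R, π ((p : R) * x) = 0 := fun x => (hker _).mpr ⟨x, rfl⟩
  -- commutators with z and w are in pR
  have hzc : ∀ r : R, ∃ a : R, z * r - r * z = (p : R) * a := by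
    intro r
    rw [← hker]
    simp [map_sub, map_mul, (Subring.mem_center_iff.mp hz (π r)).symm]
  have hwc : ∀ r : R, ∃ a : R, w * r - r * w = (p : R) * a := by
    intro r
    rw [← hker]
    simp [map_sub, map_mul, (Subring.mem_center_iff.mp hw (π r)).symm]
  refine ⟨hzc w, ?_⟩
  intro u hu
  constructor
  · -- π u central
    rw [Subring.mem_center_iff]
    intro g
    obtain ⟨r, rfl⟩ := hsurj g
    have h0 : π (u * r - r * u) = 0 := by
      obtain ⟨a, ha⟩ := hzc r
      obtain ⟨b, hb⟩ := hwc r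
      obtain ⟨c1, hc1⟩ := hwc a
      obtain ⟨c2, hc2⟩ := hzc b
      -- Jacobi identity: [[z,w],r] = [[z,r],w] + [z,[w,r]]
      have key : (p : R) * (u * r - r * u)
          = (p : R) * ((p : R) * ((- c1) + c2)) := by
        calc (p : R) * (u * r - r * u)
            = ((p : R) * u) * r - r * ((p : R) * u) := by
              simp only [mul_sub, hswap, mul_assoc]
          _ = (z * w - w * z) * r - r * (z * w - w * z) := by rw [hu]
          _ = ((z * r - r * z) * w - w * (z * r - r * z))
              + (z * (w * r - r * w) - (w * r - r * w) * z) := by noncomm_ring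
          _ = ((p : R) * a * w - w * ((p : R) * a))
              + (z * ((p : R) * b) - (p : R) * b * z) := by rw [ha, hb]
          _ = (p : R) * (a * w - w * a) + (p : R) * (z * b - b * z) := by
              simp only [mul_sub, hswap, mul_assoc]
          _ = (p : R) * ((p : R) * (- c1)) + (p : R) * ((p : R) * c2) := by
              rw [hc2]
              congr 1
              congr 1
              rw [mul_neg, ← hc1]
              abel
          _ = (p : R) * ((p : R) * ((- c1) + c2)) := by rw [← mul_add, ← mul_add]
      rw [hcan _ _ key]
      exact hpz _
    exact (sub_eq_zero.mp (by rwa [map_sub, map_mul, map_mul] at h0)).symm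
  · -- independence of lifts
    intro z' w' u' hz' hw' hu'
    obtain ⟨s, hs⟩ := (hker (z' - z)).mp (by rw [map_sub, hz', sub_self])
    obtain ⟨t, ht⟩ := (hker (w' - w)).mp (by rw [map_sub, hw', sub_self])
    have hz'' : z' = z + (p : R) * s := by rw [← hs]; abel
    have hw'' : w' = w + (p : R) * t := by rw [← ht]; abel
    obtain ⟨c1, hc1⟩ := hzc t   -- z * t - t * z = p * c1
    obtain ⟨c2, hc2⟩ := hwc s   -- w * s - s * w = p * c2
    have e1 : z * ((p:R) * t) - (p:R) * t * z = (p:R) * ((p:R) * c1) := by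
      rw [← hc1]; simp only [mul_sub, hswap, mul_assoc]
    have e2 : (p:R) * s * w - w * ((p:R) * s) = (p:R) * ((p:R) * (- c2)) := by
      have h1 : (p:R) * s * w - w * ((p:R) * s) = (p:R) * (s * w - w * s) := by
        simp only [mul_sub, hswap, mul_assoc]
      rw [h1, mul_neg, ← hc2, neg_sub]
    have e3 : (p:R) * s * ((p:R) * t) - (p:R) * t * ((p:R) * s)
        = (p:R) * ((p:R) * (s * t - t * s)) := by
      simp only [mul_sub, hswap, mul_assoc]
    have key : (p : R) * u'
        = (p : R) * (u + (p : R) * (c1 + (- c2) + (s * t - t * s))) := by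
      calc (p : R) * u' = z' * w' - w' * z' := hu'.symm
        _ = (z + (p : R) * s) * (w + (p : R) * t)
            - (w + (p : R) * t) * (z + (p : R) * s) := by rw [← hz'', ← hw'']
        _ = (z * w - w * z) + (z * ((p:R) * t) - (p:R) * t * z)
            + ((p:R) * s * w - w * ((p:R) * s))
            + ((p:R) * s * ((p:R) * t) - (p:R) * t * ((p:R) * s)) := by noncomm_ring
        _ = (p:R) * u + (p : R) * ((p:R) * c1) + (p : R) * ((p:R) * (- c2))
            + (p : R) * ((p:R) * (s * t - t * s)) := by rw [hu, e1, e2, e3]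
        _ = (p : R) * (u + (p : R) * (c1 + (- c2) + (s * t - t * s))) := by
            simp only [mul_add]
            abel
    rw [hcan _ _ key, map_add, hpz, add_zero]
end

section
/- Let A be an associative algebra over a field k with a nonnegative filtration whose associated graded algebra is a commutative domain. Then every inner automorphism of A of finite order n, where k contains a primitive n-th root of unity and n > 1, must be the identity. Equivalently: a nontrivial finite-order automorphism of A (diagonalizable over k) cannot be inner. -/
/-!
Write `u ∈ F i`, `u⁻¹ ∈ F m` with `i`, `m` exact degrees. Since the associated graded ring is a
domain, `1 = u u⁻¹` has degree `i + m`, so `i + m ≤ 0`; since it is commutative,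
`u a u⁻¹ - a = [u, a] u⁻¹` has degree below that of `a`. Thus `φ - 1` strictly lowers the
filtration. Take `a` of least degree with `φ a ≠ a`; then `x = φ a - a` is fixed, so
`a = φ^n a = a + n x`, forcing `x = 0` because `n` is invertible in `k`.
-/

section Filtration

variable {R M : Type*} [Semiring R] [AddCommMonoid M] [Module R M] (F : ℤ → Submodule R M)

theorem exists_least_filtration_index (hneg : ∀ n : ℤ, n < 0 → F n = ⊥)
    (hexh : ∀ a : M, ∃ i : ℤ, a ∈ F i) {p : M → Prop} (hp0 : ¬ p 0) (hp : ∃ a, p a) :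
    ∃ j : ℤ, (∃ a ∈ F j, p a) ∧ ∀ a ∈ F (j - 1), ¬ p a := by
  have hbdd : ∃ b : ℤ, ∀ j : ℤ, (∃ a ∈ F j, p a) → b ≤ j := by
    refine ⟨0, fun j ⟨a, haj, hpa⟩ => not_lt.mp fun hj => hp0 ?_⟩
    rw [hneg j hj, Submodule.mem_bot] at haj
    rwa [haj] at hpa
  obtain ⟨a, hpa⟩ := hp
  obtain ⟨j, hj, hleast⟩ := Int.exists_least_of_bdd hbdd
    (by obtain ⟨i, hai⟩ := hexh a; exact ⟨i, a, hai, hpa⟩)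
  exact ⟨j, hj, fun b hb hpb => by have := hleast _ ⟨b, hb, hpb⟩; omega⟩

theorem exists_mem_filtration_not_mem_pred (hneg : ∀ n : ℤ, n < 0 → F n = ⊥)
    (hexh : ∀ a : M, ∃ i : ℤ, a ∈ F i) {a : M} (ha : a ≠ 0) :
    ∃ j : ℤ, a ∈ F j ∧ a ∉ F (j - 1) := by
  obtain ⟨j, ⟨b, hb, rfl⟩, hnot⟩ :=
    exists_least_filtration_index F hneg hexh (p := (· = a)) ha.symm ⟨a, rfl⟩
  exact ⟨j, hb, fun h => hnot b h rfl⟩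

end Filtration

namespace Module.End

variable {k M : Type*} [Field k] [AddCommGroup M] [Module k M]

theorem pow_apply_of_apply_sub_fixed (f : Module.End k M) {a : M} (hfix : f (f a - a) = f a - a)
    (m : ℕ) : (f ^ m) a = a + m • (f a - a) := by
  induction m with
  | zero => simp
  | succ m ih =>
    rw [pow_succ', Module.End.mul_apply, ih, map_add, map_nsmul, hfix, succ_nsmul]
    abel

theorem apply_eq_self_of_pow_eq_one (f : Module.End k M) {n : ℕ} (hn : (n : k) ≠ 0)
    (hord : f ^ n = 1) {a : M} (hfix : f (f a - a) = f a - a) : f a = a := by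
  have hnx : (n : k) • (f a - a) = 0 := by
    have := f.pow_apply_of_apply_sub_fixed hfix n
    rw [hord, Module.End.one_apply, left_eq_add] at this
    rwa [Nat.cast_smul_eq_nsmul]
  exact sub_eq_zero.mp ((smul_eq_zero.mp hnx).resolve_left hn)

theorem eq_one_of_pow_eq_one_of_sub_mem_pred (F : ℤ → Submodule k M)
    (hneg : ∀ n : ℤ, n < 0 → F n = ⊥) (hexh : ∀ a : M, ∃ i : ℤ, a ∈ F i) (f : Module.End k M)
    (hlower : ∀ j : ℤ, ∀ a ∈ F j, f a - a ∈ F (j - 1)) {n : ℕ} (hn : (n : k) ≠ 0)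
    (hord : f ^ n = 1) : f = 1 := by
  by_contra hf
  have hmoved : ∃ a, f a ≠ a := by
    by_contra! h
    exact hf (LinearMap.ext h)
  obtain ⟨j, ⟨a, ha, hfa⟩, hleast⟩ :=
    exists_least_filtration_index F hneg hexh (p := fun a => f a ≠ a) (by simp) hmoved
  have hfix : f (f a - a) = f a - a := not_not.mp (hleast _ (hlower j a ha))
  exact hfa (f.apply_eq_self_of_pow_eq_one hn hord hfix)

end Module.End

section GradedCommDomain

variable {k A : Type*} [CommRing k] [Ring A] [Algebra k A] (F : ℤ → Submodule k A)

theorem exists_mem_filtration_unit_inv_add_nonpos [Nontrivial A]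
    (hneg : ∀ n : ℤ, n < 0 → F n = ⊥) (hmono : Monotone F) (hone : (1 : A) ∈ F 0)
    (hexh : ∀ a : A, ∃ i : ℤ, a ∈ F i)
    (hgrdom : ∀ i j : ℤ, ∀ x y : A, x ∈ F i → x ∉ F (i - 1) → y ∈ F j → y ∉ F (j - 1) →
      x * y ∉ F (i + j - 1))
    (u : Aˣ) : ∃ i m : ℤ, (u : A) ∈ F i ∧ (↑u⁻¹ : A) ∈ F m ∧ i + m ≤ 0 := by
  obtain ⟨i, hu, hu'⟩ := exists_mem_filtration_not_mem_pred F hneg hexh u.ne_zero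
  obtain ⟨m, hv, hv'⟩ := exists_mem_filtration_not_mem_pred F hneg hexh u⁻¹.ne_zero
  refine ⟨i, m, hu, hv, not_lt.mp fun him => ?_⟩
  have h1 : (1 : A) ∉ F (i + m - 1) := u.mul_inv ▸ hgrdom i m _ _ hu hu' hv hv'
  exact h1 (hmono (by omega : (0 : ℤ) ≤ i + m - 1) hone)

theorem conj_sub_mem_filtration_pred (hmono : Monotone F)
    (hmul : ∀ i j : ℤ, ∀ x ∈ F i, ∀ y ∈ F j, x * y ∈ F (i + j))
    (hgrcomm : ∀ i j : ℤ, ∀ x y : A, x ∈ F i → y ∈ F j → x * y - y * x ∈ F (i + j - 1))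
    (u : Aˣ) {i m : ℤ} (hu : (u : A) ∈ F i) (hv : (↑u⁻¹ : A) ∈ F m) (him : i + m ≤ 0)
    {j : ℤ} {a : A} (ha : a ∈ F j) : (u : A) * a * ↑u⁻¹ - a ∈ F (j - 1) := by
  have heq : (u : A) * a * ↑u⁻¹ - a = ((u : A) * a - a * u) * ↑u⁻¹ := by
    rw [sub_mul, mul_assoc a, u.mul_inv, mul_one]
  rw [heq]
  exact hmono (by omega) (hmul _ _ _ (hgrcomm i j _ _ hu ha) _ hv)

end GradedCommDomain

/-- Let `A` be an associative algebra over a field `k` with a nonnegative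
exhaustive filtration whose associated graded algebra is a commutative domain (encoded as in
the leading-symbol conditions below).  Then every inner automorphism of `A` of finite order
`n`, where `k` contains a primitive `n`-th root of unity, must be the identity. -/
theorem fixed_ring_stmt_6 (k A : Type*) [Field k] [Ring A] [Algebra k A]
    (F : ℤ → Submodule k A)
    (hneg : ∀ n : ℤ, n < 0 → F n = ⊥)
    (hmono : Monotone F)
    (hone : (1 : A) ∈ F 0)
    (hmul : ∀ i j : ℤ, ∀ x ∈ F i, ∀ y ∈ F j, x * y ∈ F (i + j))
    (hexh : ∀ a : A, ∃ i : ℤ, a ∈ F i)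
    (hgrdom : ∀ i j : ℤ, ∀ x y : A, x ∈ F i → x ∉ F (i - 1) → y ∈ F j → y ∉ F (j - 1) →
      x * y ∉ F (i + j - 1))
    (hgrcomm : ∀ i j : ℤ, ∀ x y : A, x ∈ F i → y ∈ F j → x * y - y * x ∈ F (i + j - 1))
    (φ : A ≃ₐ[k] A) (u : Aˣ) (hinner : ∀ a : A, φ a = (u : A) * a * (↑u⁻¹ : A))
    (n : ℕ) (hn : 0 < n) (hord : φ ^ n = 1)
    (ζ : k) (hζ : IsPrimitiveRoot ζ n) :
    φ = AlgEquiv.refl := by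
  rcases subsingleton_or_nontrivial A with hA | hA
  · exact AlgEquiv.ext fun a => Subsingleton.elim _ _
  obtain ⟨i, m, hu, hv, him⟩ :=
    exists_mem_filtration_unit_inv_add_nonpos F hneg hmono hone hexh hgrdom u
  have hnk : (n : k) ≠ 0 := by
    have : NeZero n := .of_pos hn
    exact hζ.neZero'.out
  have hlin : φ.toLinearMap = 1 := by
    refine Module.End.eq_one_of_pow_eq_one_of_sub_mem_pred F hneg hexh _ (fun j a ha => ?_) hnk
      (by rw [← AlgEquiv.pow_toLinearMap, hord, AlgEquiv.one_toLinearMap])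
    rw [AlgEquiv.toLinearMap_apply, hinner]
    exact conj_sub_mem_filtration_pred F hmono hmul hgrcomm u hu hv him ha
  exact AlgEquiv.ext (LinearMap.congr_fun hlin)
end

section
/- Let A be a filtered k-algebra with associated graded a commutative domain and suppose A is a finite module over its center Z, with skew field of fractions D obtained by inverting nonzero central elements. Then Z(A^G) = Z(A)^G for any finite subgroup G ⊆ Aut_k(A) such that k contains a primitive |G|-th root of unity. -/
namespace FRS14

variable {k A : Type*} [Field k] [Ring A] [Algebra k A] [IsDomain A]
variable {F : ℤ → Submodule k A}

noncomputable def deg (F : ℤ → Submodule k A) (hexh : ∀ a : A, ∃ i : ℤ, a ∈ F i) (x : A) : ℕ :=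
  sInf {n : ℕ | x ∈ F (n : ℤ)}

theorem deg_setNonempty (hmono : Monotone F) (hexh : ∀ a : A, ∃ i : ℤ, a ∈ F i) (x : A) :
    {n : ℕ | x ∈ F (n : ℤ)}.Nonempty := by
  obtain ⟨i, hi⟩ := hexh x
  exact ⟨i.toNat, hmono (Int.self_le_toNat i) hi⟩

theorem deg_mem (hmono : Monotone F) (hexh : ∀ a : A, ∃ i : ℤ, a ∈ F i) (x : A) :
    x ∈ F (deg F hexh x : ℤ) :=
  Nat.sInf_mem (deg_setNonempty hmono hexh x)

theorem deg_le (hexh : ∀ a : A, ∃ i : ℤ, a ∈ F i) {x : A} {n : ℕ} (h : x ∈ F (n : ℤ)) :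
    deg F hexh x ≤ n :=
  Nat.sInf_le h

theorem mem_of_deg_le (hmono : Monotone F) (hexh : ∀ a : A, ∃ i : ℤ, a ∈ F i) {x : A} {i : ℤ}
    (h : (deg F hexh x : ℤ) ≤ i) : x ∈ F i :=
  hmono h (deg_mem hmono hexh x)

theorem notMem_of_lt_deg (hneg : ∀ n : ℤ, n < 0 → F n = ⊥)
    (hexh : ∀ a : A, ∃ i : ℤ, a ∈ F i) {x : A} (hx : x ≠ 0) {i : ℤ}
    (hi : i < (deg F hexh x : ℤ)) : x ∉ F i := by
  intro hmem
  rcases lt_or_ge i 0 with h0 | h0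
  · rw [hneg i h0] at hmem
    exact hx (by simpa using hmem)
  · lift i to ℕ using h0
    have := deg_le hexh hmem
    exact absurd hi (by push_cast; omega)

theorem deg_notmem (hneg : ∀ n : ℤ, n < 0 → F n = ⊥)
    (hexh : ∀ a : A, ∃ i : ℤ, a ∈ F i) {x : A} (hx : x ≠ 0) :
    x ∉ F ((deg F hexh x : ℤ) - 1) :=
  notMem_of_lt_deg hneg hexh hx (by omega)

theorem deg_mul (hneg : ∀ n : ℤ, n < 0 → F n = ⊥) (hmono : Monotone F)
    (hmul : ∀ i j : ℤ, ∀ x ∈ F i, ∀ y ∈ F j, x * y ∈ F (i + j))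
    (hexh : ∀ a : A, ∃ i : ℤ, a ∈ F i)
    (hgrdom : ∀ i j : ℤ, ∀ x y : A, x ∈ F i → x ∉ F (i - 1) → y ∈ F j → y ∉ F (j - 1) →
      x * y ∉ F (i + j - 1))
    {x y : A} (hx : x ≠ 0) (hy : y ≠ 0) :
    deg F hexh (x * y) = deg F hexh x + deg F hexh y ∧
      x * y ∉ F (((deg F hexh x : ℤ) + deg F hexh y) - 1) := by
  have hnotin : x * y ∉ F (((deg F hexh x : ℤ) + deg F hexh y) - 1) :=
    hgrdom _ _ x y (deg_mem hmono hexh x) (deg_notmem hneg hexh hx)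
      (deg_mem hmono hexh y) (deg_notmem hneg hexh hy)
  have hin : x * y ∈ F ((deg F hexh x : ℤ) + deg F hexh y) :=
    hmul _ _ x (deg_mem hmono hexh x) y (deg_mem hmono hexh y)
  have h1 : deg F hexh (x * y) ≤ deg F hexh x + deg F hexh y :=
    deg_le hexh (by push_cast; exact hin)
  have h2 : ¬ deg F hexh (x * y) < deg F hexh x + deg F hexh y := by
    intro hlt
    exact hnotin (mem_of_deg_le hmono hexh (by push_cast; omega))
  exact ⟨by omega, hnotin⟩

theorem conj_sub_mem (hneg : ∀ n : ℤ, n < 0 → F n = ⊥) (hmono : Monotone F)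
    (hmul : ∀ i j : ℤ, ∀ x ∈ F i, ∀ y ∈ F j, x * y ∈ F (i + j))
    (hexh : ∀ a : A, ∃ i : ℤ, a ∈ F i)
    (hgrdom : ∀ i j : ℤ, ∀ x y : A, x ∈ F i → x ∉ F (i - 1) → y ∈ F j → y ∉ F (j - 1) →
      x * y ∉ F (i + j - 1))
    (hgrcomm : ∀ i j : ℤ, ∀ x y : A, x ∈ F i → y ∈ F j → x * y - y * x ∈ F (i + j - 1))
    {u v c : A} (hu : u ≠ 0) (hv : v ≠ 0) (hc : c ≠ 0) (h : u * c = c * v) :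
    u - v ∈ F ((deg F hexh v : ℤ) - 1) := by
  have h1 := (deg_mul hneg hmono hmul hexh hgrdom hu hc).1
  have h2 := (deg_mul hneg hmono hmul hexh hgrdom hc hv).1
  have hdeg : deg F hexh u = deg F hexh v := by
    rw [h] at h1; omega
  have hmemc : (u - v) * c ∈ F ((deg F hexh c : ℤ) + deg F hexh v - 1) := by
    have hcv := hgrcomm (deg F hexh c) (deg F hexh v) c v
      (deg_mem hmono hexh c) (deg_mem hmono hexh v)
    have : (u - v) * c = c * v - v * c := by rw [sub_mul, h]
    rw [this]
    exact hcv
  by_cases hz : u - v = 0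
  · rw [hz]; exact Submodule.zero_mem _
  · have h3 := (deg_mul hneg hmono hmul hexh hgrdom hz hc).2
    have hlt : deg F hexh (u - v) < deg F hexh v := by
      by_contra hge
      push_neg at hge
      exact h3 (hmono (by push_cast; omega) hmemc)
    exact mem_of_deg_le hmono hexh (by push_cast; omega)

set_option linter.unusedSectionVars false in
theorem eq_id_of_conj (hneg : ∀ n : ℤ, n < 0 → F n = ⊥) (hmono : Monotone F)
    (hmul : ∀ i j : ℤ, ∀ x ∈ F i, ∀ y ∈ F j, x * y ∈ F (i + j))
    (hexh : ∀ a : A, ∃ i : ℤ, a ∈ F i)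
    (hgrdom : ∀ i j : ℤ, ∀ x y : A, x ∈ F i → x ∉ F (i - 1) → y ∈ F j → y ∉ F (j - 1) →
      x * y ∉ F (i + j - 1))
    (hgrcomm : ∀ i j : ℤ, ∀ x y : A, x ∈ F i → y ∈ F j → x * y - y * x ∈ F (i + j - 1))
    (f : A ≃ₐ[k] A) (N : ℕ) (hfN : f ^ N = 1)
    (hNs : ∀ y : A, N • y = 0 → y = 0)
    {u : A} (hu : u ≠ 0) (hconj : ∀ x : A, f x * u = u * x) :
    ∀ x : A, f x = x := by
  have key : ∀ n : ℕ, ∀ x : A, deg F hexh x ≤ n → f x = x := by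
    intro n
    induction n using Nat.strong_induction_on with
    | _ n IH =>
      intro x hdx
      by_cases hx0 : x = 0
      · simp [hx0]
      have hfx0 : f x ≠ 0 := fun h => hx0 (by simpa using congrArg f.symm h)
      have hy : f x - x ∈ F ((deg F hexh x : ℤ) - 1) :=
        conj_sub_mem hneg hmono hmul hexh hgrdom hgrcomm hfx0 hx0 hu (hconj x)
      set y := f x - x with hydef
      by_cases hy0 : y = 0
      · exact sub_eq_zero.mp hy0
      rcases Nat.eq_zero_or_pos (deg F hexh x) with hdeg0 | hpos
      · exfalso
        rw [hdeg0] at hy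
        norm_num at hy
        rw [hneg (-1) (by norm_num)] at hy
        exact hy0 (by simpa using hy)
      have hdy : deg F hexh y < deg F hexh x := by
        have hmem : y ∈ F ((deg F hexh x - 1 : ℕ) : ℤ) := by
          have hc : ((deg F hexh x - 1 : ℕ) : ℤ) = (deg F hexh x : ℤ) - 1 := by
            omega
          rw [hc]; exact hy
        have := deg_le hexh hmem
        omega
      have hfy : f y = y := IH (deg F hexh y) (lt_of_lt_of_le hdy hdx) y le_rfl
      have hfx : f x = x + y := by rw [hydef, add_sub_cancel]
      have hpowy : ∀ j : ℕ, (f ^ j) y = y := by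
        intro j
        induction j with
        | zero => rw [pow_zero]; rfl
        | succ j hj => rw [pow_succ, AlgEquiv.mul_apply, hfy, hj]
      have hpow : ∀ j : ℕ, (f ^ j) x = x + j • y := by
        intro j
        induction j with
        | zero => rw [pow_zero, zero_smul, add_zero]; rfl
        | succ j hj =>
          rw [pow_succ, AlgEquiv.mul_apply, hfx, map_add, hj, hpowy j, succ_nsmul, add_assoc]
      have hNx := hpow N
      rw [hfN, AlgEquiv.one_apply] at hNx
      have hzero : N • y = 0 := by
        have := hNx.symm
        rwa [add_eq_left] at this
      exact absurd (hNs y hzero) hy0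
  intro x
  exact key _ x le_rfl

set_option linter.unusedSectionVars false in
set_option maxHeartbeats 1000000 in
set_option synthInstance.maxHeartbeats 200000 in
theorem quasi_inv_aux : ∀ (m : ℕ) (c : A), c ≠ 0 → ∀ (φ : ℕ → A), (∀ i x, φ i * x = x * φ i) →
    c ^ m + ∑ i ∈ Finset.range m, φ i * c ^ i = 0 →
    ∃ q z : A, (∀ x, z * x = x * z) ∧ z ≠ 0 ∧ c * q = z ∧ q * c = z := by
  intro m
  induction m with
  | zero =>
    intro c hc φ hφ hrel
    simp only [pow_zero, Finset.range_zero, Finset.sum_empty, add_zero] at hrel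
    exact absurd hrel one_ne_zero
  | succ m IH =>
    intro c hc φ hφ hrel
    rw [Finset.sum_range_succ'] at hrel
    simp only [pow_zero, mul_one] at hrel
    -- hrel : c ^ (m + 1) + (∑ i ∈ range m, φ (i + 1) * c ^ (i + 1) + φ 0) = 0
    by_cases h0 : φ 0 = 0
    · have hfac : (c ^ m + ∑ i ∈ Finset.range m, φ (i + 1) * c ^ i) * c = 0 := by
        rw [add_mul, Finset.sum_mul]
        rw [h0, add_zero] at hrel
        calc c ^ m * c + ∑ i ∈ Finset.range m, φ (i + 1) * c ^ i * c
            = c ^ (m + 1) + ∑ i ∈ Finset.range m, φ (i + 1) * c ^ (i + 1) := by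
              rw [← pow_succ]
              congr 1
              refine Finset.sum_congr rfl fun i _ => ?_
              rw [mul_assoc, ← pow_succ]
          _ = 0 := hrel
      rcases mul_eq_zero.mp hfac with h | h
      · exact IH c hc (fun i => φ (i + 1)) (fun i x => hφ (i + 1) x) h
      · exact absurd h hc
    · refine ⟨-(c ^ m + ∑ i ∈ Finset.range m, φ (i + 1) * c ^ i), φ 0,
        fun x => hφ 0 x, h0, ?_, ?_⟩
      · rw [mul_neg]
        have hexp : c * (c ^ m + ∑ i ∈ Finset.range m, φ (i + 1) * c ^ i)
            = c ^ (m + 1) + ∑ i ∈ Finset.range m, φ (i + 1) * c ^ (i + 1) := by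
          rw [mul_add, Finset.mul_sum]
          congr 1
          · rw [← pow_succ']
          · refine Finset.sum_congr rfl fun i _ => ?_
            rw [← mul_assoc, ← hφ (i + 1) c, mul_assoc, ← pow_succ']
        rw [hexp]
        rw [← add_assoc] at hrel
        exact neg_eq_of_add_eq_zero_right hrel
      · rw [neg_mul]
        have hexp : (c ^ m + ∑ i ∈ Finset.range m, φ (i + 1) * c ^ i) * c
            = c ^ (m + 1) + ∑ i ∈ Finset.range m, φ (i + 1) * c ^ (i + 1) := by
          rw [add_mul, Finset.sum_mul]
          congr 1
          · rw [← pow_succ]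
          · refine Finset.sum_congr rfl fun i _ => ?_
            rw [mul_assoc, ← pow_succ]
        rw [hexp]
        rw [← add_assoc] at hrel
        exact neg_eq_of_add_eq_zero_right hrel

set_option linter.unusedSectionVars false in
set_option maxHeartbeats 1000000 in
set_option synthInstance.maxHeartbeats 200000 in
theorem exists_quasi_inv [Module.Finite (Subalgebra.center k A) A] {c : A} (hc : c ≠ 0) :
    ∃ q z : A, (∀ x, z * x = x * z) ∧ z ≠ 0 ∧ c * q = z ∧ q * c = z := by
  set Z := Subalgebra.center k A with hZ
  have hsm : ∀ (z : Z) (x : A), z • x = (z : A) * x := fun z x => by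
    rw [Subalgebra.smul_def, smul_eq_mul]
  have hcen : ∀ (z : Z) (x : A), x * (z : A) = (z : A) * x := fun z x =>
    Subalgebra.mem_center_iff.mp z.2 x
  let ψ : Module.End Z A :=
    { toFun := fun x => c * x
      map_add' := fun x y => mul_add c x y
      map_smul' := fun z x => by
        simp only [RingHom.id_apply]
        rw [hsm, hsm, ← mul_assoc, ← mul_assoc, hcen z c] }
  have hint : IsIntegral Z ψ := Algebra.IsIntegral.isIntegral (R := Z) ψ
  obtain ⟨P, hP, hP0⟩ := hint
  have hψpow : ∀ (i : ℕ) (x : A), (ψ ^ i) x = c ^ i * x := by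
    intro i
    induction i with
    | zero => intro x; rw [pow_zero, pow_zero, one_mul]; rfl
    | succ i hi =>
      intro x
      rw [pow_succ, Module.End.mul_apply, hi (ψ x)]
      show c ^ i * (c * x) = c ^ (i + 1) * x
      rw [← mul_assoc, ← pow_succ]
  have heval := Polynomial.aeval_eq_sum_range (R := Z) (p := P) ψ
  rw [show Polynomial.aeval ψ P = 0 from hP0] at heval
  have h1 : (0 : A) = ∑ i ∈ Finset.range (P.natDegree + 1), (P.coeff i : A) * c ^ i := by
    calc (0 : A) = (0 : Module.End Z A) 1 := rfl
      _ = (∑ i ∈ Finset.range (P.natDegree + 1), P.coeff i • ψ ^ i) 1 := by rw [← heval]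
      _ = ∑ i ∈ Finset.range (P.natDegree + 1), (P.coeff i • ψ ^ i) 1 := by
          rw [LinearMap.coe_sum, Finset.sum_apply]
      _ = ∑ i ∈ Finset.range (P.natDegree + 1), (P.coeff i : A) * c ^ i := by
          refine Finset.sum_congr rfl fun i _ => ?_
          rw [LinearMap.smul_apply, hsm, hψpow i 1, mul_one]
  rw [Finset.sum_range_succ] at h1
  have hlead : ((P.coeff P.natDegree : Z) : A) = 1 := by
    rw [hP.coeff_natDegree]; rfl
  rw [hlead, one_mul] at h1
  refine quasi_inv_aux P.natDegree c hc (fun i => ((P.coeff i : Z) : A))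
    (fun i x => (hcen (P.coeff i) x).symm) ?_
  rw [add_comm]
  exact h1.symm

variable (G : Subgroup (A ≃ₐ[k] A))

open Classical in
/-- The relation predicate: `v` encodes right coefficients of a generalized identity. -/
def relset [Fintype G] (a : A) (v : G × Bool → A) : Prop :=
  ∀ x : A, ∑ g : G, (a * (g : A ≃ₐ[k] A) x * v (g, true) + (g : A ≃ₐ[k] A) x * v (g, false)) = 0

open Classical in
noncomputable def wt [Fintype G] (v : G × Bool → A) : ℕ :=
  (Finset.univ.filter fun s => v s ≠ 0).card

set_option linter.unusedSectionVars false in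
theorem relset_shift [Fintype G] {a : A} {v : G × Bool → A} (hv : relset G a v)
    (y w zc : A) :
    relset G a (fun s => (s.1 : A ≃ₐ[k] A) y * v s * zc - v s * w) := by
  intro x
  have h1 := hv (x * y)
  have h2 := hv x
  calc ∑ g : G, (a * (g : A ≃ₐ[k] A) x *
          ((g : A ≃ₐ[k] A) y * v (g, true) * zc - v (g, true) * w) +
        (g : A ≃ₐ[k] A) x *
          ((g : A ≃ₐ[k] A) y * v (g, false) * zc - v (g, false) * w))
      = (∑ g : G, (a * (g : A ≃ₐ[k] A) (x * y) * v (g, true) +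
            (g : A ≃ₐ[k] A) (x * y) * v (g, false))) * zc
        - (∑ g : G, (a * (g : A ≃ₐ[k] A) x * v (g, true) +
            (g : A ≃ₐ[k] A) x * v (g, false))) * w := by
        rw [Finset.sum_mul, Finset.sum_mul, ← Finset.sum_sub_distrib]
        refine Finset.sum_congr rfl fun g _ => ?_
        rw [map_mul]
        noncomm_ring
    _ = 0 := by rw [h1, h2, zero_mul, zero_mul, sub_zero]

open Classical in
set_option linter.unusedSectionVars false in
theorem wt_lt [Fintype G] {v v' : G × Bool → A} (h0 : ∀ s, v s = 0 → v' s = 0)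
    {s₀ : G × Bool} (h1 : v s₀ ≠ 0) (h2 : v' s₀ = 0) : wt G v' < wt G v := by
  apply Finset.card_lt_card
  have hsub : (Finset.univ.filter fun s => v' s ≠ 0) ⊆ (Finset.univ.filter fun s => v s ≠ 0) := by
    intro s hs
    simp only [Finset.mem_filter, Finset.mem_univ, true_and] at hs ⊢
    intro h
    exact hs (h0 s h)
  rw [Finset.ssubset_iff_of_subset hsub]
  refine ⟨s₀, ?_, ?_⟩
  · simp only [Finset.mem_filter, Finset.mem_univ, true_and]
    exact h1
  · simp only [Finset.mem_filter, Finset.mem_univ, true_and, not_not]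
    exact h2

end FRS14

set_option maxHeartbeats 1000000 in
/-- **Montgomery's theorem in our setting.** Let `A` be a filtered Noetherian
`k`-domain with associated graded a commutative domain, finite as a module over its center.
Then `Z(A^G) = Z(A)^G` for any finite subgroup `G ⊆ Aut_k(A)` such that `k` contains a
primitive `|G|`-th root of unity.  (Elementwise: an element of `A` is fixed by `G` and
commutes with all `G`-fixed elements iff it is central and fixed by `G`.) -/
theorem fixed_ring_stmt_14 (k A : Type*) [Field k] [Ring A] [Algebra k A]
    [IsDomain A] [IsNoetherianRing A] [Module.Finite (Subalgebra.center k A) A]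
    (F : ℤ → Submodule k A)
    (hneg : ∀ n : ℤ, n < 0 → F n = ⊥)
    (hmono : Monotone F)
    (hone : (1 : A) ∈ F 0)
    (hmul : ∀ i j : ℤ, ∀ x ∈ F i, ∀ y ∈ F j, x * y ∈ F (i + j))
    (hexh : ∀ a : A, ∃ i : ℤ, a ∈ F i)
    (hgrdom : ∀ i j : ℤ, ∀ x y : A, x ∈ F i → x ∉ F (i - 1) → y ∈ F j → y ∉ F (j - 1) →
      x * y ∉ F (i + j - 1))
    (hgrcomm : ∀ i j : ℤ, ∀ x y : A, x ∈ F i → y ∈ F j → x * y - y * x ∈ F (i + j - 1))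
    (G : Subgroup (A ≃ₐ[k] A)) [Finite G]
    (hroot : ∃ ζ : k, IsPrimitiveRoot ζ (Nat.card G)) :
    ∀ a : A,
      ((∀ g ∈ G, g a = a) ∧ ∀ b : A, (∀ g ∈ G, g b = b) → a * b = b * a) ↔
      (a ∈ Subalgebra.center k A ∧ ∀ g ∈ G, g a = a) := by
  intro a
  constructor
  · rintro ⟨hafix, hacomm⟩
    refine ⟨?_, hafix⟩
    suffices hcen : ∀ z : A, a * z = z * a by
      exact Subalgebra.mem_center_iff.mpr fun b => (hcen b).symm
    classical
    haveI : Fintype G := Fintype.ofFinite _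
    obtain ⟨ζ, hζ⟩ := hroot
    have hNpos : 0 < Nat.card G := Nat.card_pos
    haveI : NeZero (Nat.card G) := ⟨hNpos.ne'⟩
    have hNk : ((Nat.card G : ℕ) : k) ≠ 0 := hζ.neZero'.out
    have hNs : ∀ y : A, (Nat.card G) • y = 0 → y = 0 := by
      intro y hy
      have h1 : ((Nat.card G : ℕ) : k) • y = 0 := by
        rw [Nat.cast_smul_eq_nsmul]; exact hy
      rcases smul_eq_zero.mp h1 with h | h
      · exact absurd h hNk
      · exact h
    -- no nontrivial element of `G` admits a conjugation witness
    have houter : ∀ f : G, f ≠ 1 → ∀ u : A, u ≠ 0 →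
        ¬ (∀ x : A, (f : A ≃ₐ[k] A) x * u = u * x) := by
      intro f hf u hu hconj
      have hfN : (f : A ≃ₐ[k] A) ^ (Nat.card G) = 1 := by
        have h1 : f ^ (Nat.card G) = 1 := pow_card_eq_one'
        calc (f : A ≃ₐ[k] A) ^ (Nat.card G) = ((f ^ (Nat.card G) : G) : A ≃ₐ[k] A) := by
              rw [SubmonoidClass.coe_pow]
          _ = ((1 : G) : A ≃ₐ[k] A) := by rw [h1]
          _ = 1 := rfl
      have hid := FRS14.eq_id_of_conj hneg hmono hmul hexh hgrdom hgrcomm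
        (f : A ≃ₐ[k] A) (Nat.card G) hfN hNs hu hconj
      apply hf
      apply Subtype.ext
      exact AlgEquiv.ext fun x => (hid x).trans (AlgEquiv.one_apply x).symm
    -- fixedness of traces
    have htfix : ∀ x : A, ∀ g' ∈ G, g' (∑ g : G, (g : A ≃ₐ[k] A) x)
        = ∑ g : G, (g : A ≃ₐ[k] A) x := by
      intro x g' hg'
      rw [map_sum]
      calc ∑ g : G, g' ((g : A ≃ₐ[k] A) x)
          = ∑ g : G, (((⟨g', hg'⟩ : G) * g : G) : A ≃ₐ[k] A) x :=
            Finset.sum_congr rfl fun g _ => rfl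
        _ = ∑ g : G, (g : A ≃ₐ[k] A) x :=
            Fintype.sum_equiv (Equiv.mulLeft (⟨g', hg'⟩ : G))
              (fun g => (((⟨g', hg'⟩ : G) * g : G) : A ≃ₐ[k] A) x)
              (fun g => (g : A ≃ₐ[k] A) x) (fun g => rfl)
    -- the base relation
    set v₀ : G × Bool → A := fun s => cond s.2 (1 : A) (-a) with hv₀def
    have hrel0 : FRS14.relset G a v₀ := by
      intro x
      have hT := hacomm _ (htfix x)
      calc ∑ g : G, (a * (g : A ≃ₐ[k] A) x * v₀ (g, true) +
              (g : A ≃ₐ[k] A) x * v₀ (g, false))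
          = a * (∑ g : G, (g : A ≃ₐ[k] A) x) - (∑ g : G, (g : A ≃ₐ[k] A) x) * a := by
            rw [Finset.mul_sum, Finset.sum_mul, ← Finset.sum_sub_distrib]
            refine Finset.sum_congr rfl fun g _ => ?_
            show a * (g : A ≃ₐ[k] A) x * 1 + (g : A ≃ₐ[k] A) x * (-a) = _
            rw [mul_one, mul_neg, sub_eq_add_neg]
        _ = 0 := by rw [hT, sub_self]
    have hv0ne : v₀ ≠ 0 := by
      refine Function.ne_iff.mpr ⟨(1, true), ?_⟩
      show (1 : A) ≠ 0
      exact one_ne_zero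
    -- a minimal-weight nonzero relation
    have hSS : {n : ℕ | ∃ v : G × Bool → A, FRS14.relset G a v ∧ v ≠ 0 ∧ FRS14.wt G v = n}.Nonempty :=
      ⟨FRS14.wt G v₀, v₀, hrel0, hv0ne, rfl⟩
    obtain ⟨v, hvrel, hvne, hvwt⟩ := Nat.sInf_mem hSS
    have hmin : ∀ v' : G × Bool → A, FRS14.relset G a v' → FRS14.wt G v' < FRS14.wt G v → v' = 0 := by
      intro v' h1 h2
      by_contra h3
      have hmem : FRS14.wt G v' ∈ {n : ℕ | ∃ v : G × Bool → A,
          FRS14.relset G a v ∧ v ≠ 0 ∧ FRS14.wt G v = n} := ⟨v', h1, h3, rfl⟩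
      have := Nat.sInf_le hmem
      omega
    obtain ⟨s₀, hs₀⟩ : ∃ s, v s ≠ 0 := Function.ne_iff.mp hvne
    obtain ⟨q, zc, hzc_cen, hzc0, hcq, hqc⟩ := FRS14.exists_quasi_inv (k := k) hs₀
    by_cases hsplit : ∃ s : G × Bool, s.1 ≠ s₀.1 ∧ v s ≠ 0
    · -- impossible: would produce a conjugation witness for a nontrivial element
      exfalso
      obtain ⟨s₁, hs₁ne, hs₁⟩ := hsplit
      have hred : ∀ y : A, (fun s : G × Bool =>
          (s.1 : A ≃ₐ[k] A) y * v s * zc - v s * (q * (s₀.1 : A ≃ₐ[k] A) y * v s₀)) = 0 := by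
        intro y
        apply hmin _ (FRS14.relset_shift G hvrel y (q * (s₀.1 : A ≃ₐ[k] A) y * v s₀) zc)
        have hzero : (s₀.1 : A ≃ₐ[k] A) y * v s₀ * zc
            - v s₀ * (q * (s₀.1 : A ≃ₐ[k] A) y * v s₀) = 0 := by
          have e1 : v s₀ * (q * (s₀.1 : A ≃ₐ[k] A) y * v s₀)
              = zc * (s₀.1 : A ≃ₐ[k] A) y * v s₀ := by
            rw [← mul_assoc, ← mul_assoc, hcq]
          rw [e1, mul_assoc zc, hzc_cen ((s₀.1 : A ≃ₐ[k] A) y * v s₀)]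
          exact sub_self _
        exact FRS14.wt_lt G (fun s hs => by simp [hs]) hs₀ hzero
      have hslot : ∀ y : A, (s₁.1 : A ≃ₐ[k] A) y * v s₁ * zc
          = v s₁ * (q * (s₀.1 : A ≃ₐ[k] A) y * v s₀) := by
        intro y
        have h := congrFun (hred y) s₁
        simpa [sub_eq_zero] using h
      have hq0 : q ≠ 0 := by
        rintro rfl
        rw [mul_zero] at hcq
        exact hzc0 hcq.symm
      have hu0 : v s₁ * q ≠ 0 := mul_ne_zero hs₁ hq0
      have hfne : (s₁.1 * s₀.1⁻¹ : G) ≠ 1 := by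
        intro h
        exact hs₁ne (mul_inv_eq_one.mp h)
      refine houter (s₁.1 * s₀.1⁻¹) hfne (v s₁ * q) hu0 ?_
      intro x
      have hy := hslot ((s₀.1 : A ≃ₐ[k] A).symm x)
      rw [AlgEquiv.apply_symm_apply] at hy
      have happ : ((s₁.1 * s₀.1⁻¹ : G) : A ≃ₐ[k] A) x
          = (s₁.1 : A ≃ₐ[k] A) ((s₀.1 : A ≃ₐ[k] A).symm x) := rfl
      rw [happ]
      apply mul_right_cancel₀ hzc0
      have h1 : ((s₁.1 : A ≃ₐ[k] A) ((s₀.1 : A ≃ₐ[k] A).symm x) * (v s₁ * q)) * zc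
          = ((s₁.1 : A ≃ₐ[k] A) ((s₀.1 : A ≃ₐ[k] A).symm x) * v s₁ * zc) * q := by
        simp only [mul_assoc]
        rw [← hzc_cen q]
      have h2 : (v s₁ * (q * x * v s₀)) * q = ((v s₁ * q) * x) * zc := by
        simp only [mul_assoc]
        rw [hcq]
      rw [h1, hy, h2]
    · -- the relation is supported on a single group element: `a` is central
      push_neg at hsplit
      have hrelh : ∀ x : A, a * (s₀.1 : A ≃ₐ[k] A) x * v (s₀.1, true)
          + (s₀.1 : A ≃ₐ[k] A) x * v (s₀.1, false) = 0 := by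
        intro x
        have h := hvrel x
        rw [Finset.sum_eq_single s₀.1] at h
        · exact h
        · intro g _ hg
          rw [hsplit (g, true) hg, hsplit (g, false) hg, mul_zero, mul_zero, add_zero]
        · intro h'
          exact absurd (Finset.mem_univ _) h'
      have hz : ∀ z : A, a * z * v (s₀.1, true) + z * v (s₀.1, false) = 0 := by
        intro z
        have h := hrelh ((s₀.1 : A ≃ₐ[k] A).symm z)
        rwa [AlgEquiv.apply_symm_apply] at h
      have h1 := hz 1
      rw [mul_one, one_mul] at h1
      have he : v (s₀.1, false) = -(a * v (s₀.1, true)) := eq_neg_of_add_eq_zero_right h1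
      have hd0 : v (s₀.1, true) ≠ 0 := by
        intro hd
        rw [hd, mul_zero, neg_zero] at he
        apply hs₀
        rw [show s₀ = (s₀.1, s₀.2) from rfl]
        cases hsb : s₀.2
        · exact he
        · exact hd
      intro z
      have h2 := hz z
      rw [he, mul_neg, ← sub_eq_add_neg, ← mul_assoc z a] at h2
      have h3 : (a * z - z * a) * v (s₀.1, true) = 0 := by
        rw [sub_mul]
        exact h2
      rcases mul_eq_zero.mp h3 with h | h
      · exact sub_eq_zero.mp h
      · exact absurd h hd0

  · rintro ⟨hc, hfix⟩
    refine ⟨hfix, fun b _ => ?_⟩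
    exact (Subalgebra.mem_center_iff.mp hc b).symm
end
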